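/- For all integers n ≥ 0 and k ≥ 1, every sequence of real numbers ᾱ = (α₀, α₁, …, α_{n−1}) and all nonzero real numbers ℓ₁, …, ℓ_k, the multiparameter poly-Bernoulli numbers are expressed through the multiparameter poly-Cauchy numbers of the second kind by B_{n,ᾱ,L}^{(k)} = Σ_{j=0}^{n} Σ_{m=j}^{n} (−1)^n m! S_ᾱ(n,m) S_ᾱ(m,j) Ĉ_{j,L}^{(k)}(ᾱ). -/

import Mathlib

/-!
The iterated integral of `t ↦ t ^ j` over the box `∏ [0, ℓᵢ]` is `(ℓ₁⋯ℓ_k) ^ (j + 1) / (j + 1) ^ k`,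
so on polynomials `iterInt` is the linear functional with these moments. Substituting `x = -t` in
the defining identity of `S_ᾱ(m, ·)` gives `∑ⱼ S_ᾱ(m, j) ∏_{i<j} (-t - αᵢ) = (-1) ^ m t ^ m`, hence
`∑ⱼ S_ᾱ(m, j) Ĉⱼ = (-1) ^ m (ℓ₁⋯ℓ_k) ^ (m + 1) / (m + 1) ^ k`. Exchanging the order of summation
in the right-hand side and inserting this identity gives the left-hand side.
-/

open Finset

/-- Iterated integral ∫₀^{ℓ₁}⋯∫₀^{ℓ_k} f(x₁x₂⋯x_k) dx₁⋯dx_k over the list of bounds. -/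
noncomputable def iterInt : List ℝ → (ℝ → ℝ) → ℝ
  | [], f => f 1
  | l :: ls, f => ∫ x in (0:ℝ)..l, iterInt ls (fun y => f (x * y))

open Polynomial

lemma iterInt_sum_mul_pow (ls : List ℝ) (s : Finset ℕ) (c : ℕ → ℝ) :
    iterInt ls (fun t => ∑ j ∈ s, c j * t ^ j)
      = ∑ j ∈ s, c j * ls.prod ^ (j + 1) / ((j : ℝ) + 1) ^ ls.length := by
  induction ls generalizing c with
  | nil => simp [iterInt]
  | cons l ls ih =>
    have inner (x : ℝ) : iterInt ls (fun y => ∑ j ∈ s, c j * (x * y) ^ j)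
        = ∑ j ∈ s, c j * ls.prod ^ (j + 1) / ((j : ℝ) + 1) ^ ls.length * x ^ j := by
      simp_rw [mul_pow, ← mul_assoc]
      rw [ih]
      exact sum_congr rfl fun j _ => by ring
    simp only [iterInt, inner]
    rw [intervalIntegral.integral_finsetSum fun j _ =>
      (by fun_prop : Continuous _).intervalIntegrable _ _]
    refine sum_congr rfl fun j _ => ?_
    rw [intervalIntegral.integral_const_mul, integral_pow, List.prod_cons, List.length_cons]
    field_simp
    ring

noncomputable def iterIntPoly (ls : List ℝ) : ℝ[X] →ₗ[ℝ] ℝ :=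
  lsum fun j => (ls.prod ^ (j + 1) / ((j : ℝ) + 1) ^ ls.length) • LinearMap.id

lemma iterIntPoly_X_pow (ls : List ℝ) (m : ℕ) :
    iterIntPoly ls (X ^ m) = ls.prod ^ (m + 1) / ((m : ℝ) + 1) ^ ls.length := by
  simp [iterIntPoly, ← monomial_one_right_eq_X_pow, sum_monomial_index]

lemma iterInt_eval (ls : List ℝ) (P : ℝ[X]) :
    iterInt ls (fun t => P.eval t) = iterIntPoly ls P := by
  simp_rw [eval_eq_sum, Polynomial.sum_def]
  rw [iterInt_sum_mul_pow]
  simp only [iterIntPoly, lsum_apply, Polynomial.sum_def, LinearMap.smul_apply, LinearMap.id_apply,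
    smul_eq_mul]
  exact sum_congr rfl fun j _ => by ring

lemma iterInt_sum_stirling (ls : List ℝ) (α : ℕ → ℝ) (m : ℕ) (s : ℕ → ℝ)
    (hs : ∀ x : ℝ, x ^ m = ∑ j ∈ range (m + 1), s j * ∏ i ∈ range j, (x - α i)) :
    ∑ j ∈ range (m + 1), s j * iterInt ls (fun t => ∏ i ∈ range j, (-t - α i))
      = (-1) ^ m * ls.prod ^ (m + 1) / ((m : ℝ) + 1) ^ ls.length := by
  set Q : ℕ → ℝ[X] := fun j => ∏ i ∈ range j, (-X - C (α i))
  have eval_Q (j : ℕ) (t : ℝ) : (Q j).eval t = ∏ i ∈ range j, (-t - α i) := by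
    simp [Q, eval_prod]
  have stirling_neg : ∑ j ∈ range (m + 1), s j • Q j = (-1 : ℝ) ^ m • X ^ m := by
    refine Polynomial.funext fun t => ?_
    simp only [eval_finsetSum, eval_smul, eval_Q, smul_eq_mul, eval_pow, eval_X]
    rw [← hs, neg_pow]
  simp_rw [← eval_Q, iterInt_eval, ← smul_eq_mul (s _), ← map_smul, ← map_sum, stirling_neg,
    map_smul, iterIntPoly_X_pow, smul_eq_mul, mul_div_assoc]

lemma sum_range_sum_Icc_comm {M : Type*} [AddCommMonoid M] (n : ℕ) (f : ℕ → ℕ → M) :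
    ∑ j ∈ range (n + 1), ∑ m ∈ Icc j n, f j m =
      ∑ m ∈ range (n + 1), ∑ j ∈ range (m + 1), f j m :=
  sum_comm' fun j m => by simp only [mem_range, mem_Icc]; omega

theorem stmt11_general (n k : ℕ) (α : ℕ → ℝ) (L : Fin k → ℝ)
    (S : ℕ → ℕ → ℝ)
    (hS : ∀ p ≤ n, ∀ x : ℝ,
      x ^ p = ∑ m ∈ range (p + 1), S p m * ∏ i ∈ range m, (x - α i)) :
    ∑ m ∈ range (n + 1),
        (-1 : ℝ) ^ (n - m) * (m.factorial : ℝ) * S n m *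
          (∏ i, L i) ^ (m + 1) / ((m : ℝ) + 1) ^ k =
      ∑ j ∈ range (n + 1), ∑ m ∈ Icc j n,
        (-1 : ℝ) ^ n * (m.factorial : ℝ) * S n m * S m j *
          iterInt (List.ofFn L) (fun t => ∏ i ∈ range j, (-t - α i)) := by
  rw [sum_range_sum_Icc_comm]
  refine sum_congr rfl fun m hm => ?_
  have hmn : m ≤ n := Nat.lt_succ_iff.mp (mem_range.mp hm)
  have hsign : (-1 : ℝ) ^ (n - m) = (-1) ^ n * (-1) ^ m := by
    rw [← pow_add, ← Nat.sub_add_cancel hmn, add_assoc, pow_add _ (n - m), ← two_mul,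
      pow_mul]
    simp
  simp_rw [mul_assoc ((-1 : ℝ) ^ n * _ * _), ← mul_sum]
  rw [iterInt_sum_stirling _ α m _ (hS m hmn), List.prod_ofFn, List.length_ofFn, hsign]
  ring

theorem stmt11 (n k : ℕ) (hk : 1 ≤ k) (α : ℕ → ℝ) (L : Fin k → ℝ)
    (hL : ∀ i, L i ≠ 0) (S : ℕ → ℕ → ℝ)
    (hS : ∀ p ≤ n, ∀ x : ℝ,
      x ^ p = ∑ m ∈ range (p + 1), S p m * ∏ i ∈ range m, (x - α i)) :
    ∑ m ∈ range (n + 1),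
        (-1 : ℝ) ^ (n - m) * (m.factorial : ℝ) * S n m *
          (∏ i, L i) ^ (m + 1) / ((m : ℝ) + 1) ^ k =
      ∑ j ∈ range (n + 1), ∑ m ∈ Icc j n,
        (-1 : ℝ) ^ n * (m.factorial : ℝ) * S n m * S m j *
          iterInt (List.ofFn L) (fun t => ∏ i ∈ range j, (-t - α i)) :=
  stmt11_general n k α L S hS
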